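/- arXiv:2105.07291 — 5 statements merged into one kernel-verified Lean document; each statement's English description precedes it below -/
import Mathlib

section
/- Let d ≥ 1, let H and H_S be d×d real symmetric positive definite matrices, let g ∈ ℝ^d, and let ε ∈ (0, 1/4). Define C_S := H^{-1/2} H_S H^{-1/2}, v_ne := -H^{-1} g and v_nsk := -H_S^{-1} g. If (1 - ε/2)·I_d ⪯ C_S ⪯ (1 + ε/2)·I_d, then √((v_ne - v_nsk)ᵀ H (v_ne - v_nsk)) ≤ ε · √(v_neᵀ H v_ne), i.e. ‖v_ne - v_nsk‖_H ≤ ε‖v_ne‖_H. (First conclusion of Theorem 1, Closeness of Newton decrements.) -/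
/-!
Whiten with `S = H^{1/2}`: for `u = S (v_ne - v_nsk)` and `w = S v_ne` one has
`C_S u = (C_S - 1) w`, and `‖·‖_H = ‖S ·‖`. The lower Loewner bound gives
`‖C_S u‖ ≥ (1 - ε/2) ‖u‖`, the two-sided one gives `‖(C_S - 1) w‖ ≤ (ε/2) ‖w‖`, so
`‖u‖ ≤ ε / (2 - ε) · ‖w‖ ≤ ε ‖w‖`.
-/

open Matrix

section OldSqrt
open scoped ComplexOrder

/-- The old Mathlib `Matrix.PosSemidef.sqrt` (removed since), with its original definition. -/
noncomputable def Matrix.PosSemidef.sqrt {n 𝕜 : Type*} [Fintype n] [DecidableEq n] [RCLike 𝕜]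
    {A : Matrix n n 𝕜} (hA : A.PosSemidef) : Matrix n n 𝕜 :=
  hA.1.eigenvectorUnitary.1 * diagonal ((↑) ∘ (√·) ∘ hA.1.eigenvalues) *
    (star hA.1.eigenvectorUnitary : Matrix n n 𝕜)

end OldSqrt

namespace Matrix

section Sqrt

open scoped ComplexOrder

variable {n 𝕜 : Type*} [Fintype n] [DecidableEq n] [RCLike 𝕜] {A : Matrix n n 𝕜}

theorem PosSemidef.posSemidef_sqrt (hA : A.PosSemidef) : hA.sqrt.PosSemidef :=
  (PosSemidef.diagonal fun i => by simp).mul_mul_conjTranspose_same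
    (hA.1.eigenvectorUnitary : Matrix n n 𝕜)

theorem PosSemidef.sqrt_mul_self (hA : A.PosSemidef) : hA.sqrt * hA.sqrt = A := by
  set U : Matrix n n 𝕜 := hA.1.eigenvectorUnitary.1
  have hU : star U * U = 1 := Unitary.coe_star_mul_self _
  set D : Matrix n n 𝕜 := diagonal ((↑) ∘ (√·) ∘ hA.1.eigenvalues)
  have hD : D * D = diagonal ((↑) ∘ hA.1.eigenvalues) := by
    simp only [D, diagonal_mul_diagonal]
    congr 1
    funext i
    simp [← RCLike.ofReal_mul, Real.mul_self_sqrt (hA.eigenvalues_nonneg i)]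
  calc hA.sqrt * hA.sqrt = U * (D * D) * star U := by
        simp only [PosSemidef.sqrt, U, D, Matrix.mul_assoc]
        rw [← Matrix.mul_assoc (star U) U, hU, Matrix.one_mul]
    _ = A := by
        rw [hD]
        conv_rhs => rw [hA.1.spectral_theorem]
        rfl

end Sqrt

variable {n : Type*} [Fintype n]

theorem IsHermitian.dotProduct_mulVec_mul_self {A : Matrix n n ℝ} (hA : A.IsHermitian)
    (x : n → ℝ) : x ⬝ᵥ (A * A) *ᵥ x = (A *ᵥ x) ⬝ᵥ (A *ᵥ x) := by
  nth_rw 1 [← hA.eq]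
  rw [← mulVec_mulVec, dotProduct_mulVec, conjTranspose_eq_transpose_of_trivial, vecMul_transpose]

theorem PosSemidef.dotProduct_mulVec_le {A B : Matrix n n ℝ} (h : (A - B).PosSemidef)
    (x : n → ℝ) : x ⬝ᵥ B *ᵥ x ≤ x ⬝ᵥ A *ᵥ x := by
  simpa [sub_mulVec] using h.dotProduct_mulVec_nonneg x

variable [DecidableEq n]

theorem dotProduct_smul_one_mulVec (c : ℝ) (x : n → ℝ) :
    x ⬝ᵥ (c • (1 : Matrix n n ℝ)) *ᵥ x = c * (x ⬝ᵥ x) := by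
  rw [smul_mulVec, one_mulVec, dotProduct_smul, smul_eq_mul]

section LoewnerBounds

variable {c : ℝ}

theorem PosSemidef.mul_self_sub_sq_smul_one {C : Matrix n n ℝ} (hc : 0 ≤ c)
    (h : (C - c • 1).PosSemidef) : (C * C - c ^ 2 • 1).PosSemidef := by
  have hsplit : C * C - c ^ 2 • 1 = (C - c • 1)ᴴ * (C - c • 1) + (2 * c) • (C - c • 1) := by
    rw [h.1.eq]
    simp only [Matrix.mul_sub, Matrix.sub_mul, Matrix.smul_mul, Matrix.mul_smul, Matrix.one_mul,
      Matrix.mul_one]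
    module
  rw [hsplit]
  exact (posSemidef_conjTranspose_mul_self _).add (h.smul (by positivity))

theorem PosSemidef.sq_smul_one_sub_mul_self {M : Matrix n n ℝ} (hc : 0 < c)
    (hlo : (M + c • 1).PosSemidef) (hhi : (c • 1 - M).PosSemidef) :
    (c ^ 2 • 1 - M * M).PosSemidef := by
  -- `P = c • 1 - M` and `Q = M + c • 1` commute with `P + Q = (2 * c) • 1`, so
  -- `P Q P + Q P Q = (P + Q) P Q = (2 * c) • (c ^ 2 • 1 - M * M)`.
  have hsplit : c ^ 2 • 1 - M * M = (2 * c)⁻¹ •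
      ((c • 1 - M)ᴴ * (M + c • 1) * (c • 1 - M) + (M + c • 1)ᴴ * (c • 1 - M) * (M + c • 1)) := by
    rw [hlo.1.eq, hhi.1.eq, eq_inv_smul_iff₀ (by positivity)]
    simp only [Matrix.mul_sub, Matrix.sub_mul, Matrix.add_mul, Matrix.mul_add, Matrix.smul_mul,
      Matrix.mul_smul, Matrix.one_mul, Matrix.mul_one, Matrix.mul_assoc]
    module
  rw [hsplit]
  exact ((hlo.conjTranspose_mul_mul_same _).add (hhi.conjTranspose_mul_mul_same _)).smul
    (by positivity)

theorem sq_mul_dotProduct_self_le {C : Matrix n n ℝ} (hc : 0 ≤ c) (h : (C - c • 1).PosSemidef)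
    (x : n → ℝ) : c ^ 2 * (x ⬝ᵥ x) ≤ (C *ᵥ x) ⬝ᵥ (C *ᵥ x) := by
  have hC : C.IsHermitian := by simpa using h.1.add (isHermitian_one.smul (k := c) rfl)
  have := (h.mul_self_sub_sq_smul_one hc).dotProduct_mulVec_le x
  rwa [dotProduct_smul_one_mulVec, hC.dotProduct_mulVec_mul_self] at this

theorem mulVec_dotProduct_mulVec_le_sq_mul {M : Matrix n n ℝ} (hc : 0 < c)
    (hlo : (M + c • 1).PosSemidef) (hhi : (c • 1 - M).PosSemidef) (x : n → ℝ) :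
    (M *ᵥ x) ⬝ᵥ (M *ᵥ x) ≤ c ^ 2 * (x ⬝ᵥ x) := by
  have hM : M.IsHermitian := by simpa using hlo.1.sub (isHermitian_one.smul (k := c) rfl)
  have := (PosSemidef.sq_smul_one_sub_mul_self hc hlo hhi).dotProduct_mulVec_le x
  rwa [dotProduct_smul_one_mulVec, hM.dotProduct_mulVec_mul_self] at this

end LoewnerBounds

theorem dotProduct_self_le_sq_mul_of_mulVec_eq {C : Matrix n n ℝ} {ε : ℝ} (hε0 : 0 < ε)
    (hε1 : ε ≤ 1) (hlo : (C - (1 - ε / 2) • 1).PosSemidef) (hhi : ((1 + ε / 2) • 1 - C).PosSemidef)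
    {u w : n → ℝ} (huw : C *ᵥ u = (C - 1) *ᵥ w) : u ⬝ᵥ u ≤ ε ^ 2 * (w ⬝ᵥ w) := by
  have hu : (1 - ε / 2) ^ 2 * (u ⬝ᵥ u) ≤ (C *ᵥ u) ⬝ᵥ (C *ᵥ u) :=
    sq_mul_dotProduct_self_le (by linarith) hlo u
  have hw : ((C - 1) *ᵥ w) ⬝ᵥ ((C - 1) *ᵥ w) ≤ (ε / 2) ^ 2 * (w ⬝ᵥ w) :=
    mulVec_dotProduct_mulVec_le_sq_mul (by positivity) (by convert hlo using 1; module)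
      (by convert hhi using 1; module) w
  refine le_of_mul_le_mul_left ?_ (pow_pos (by linarith : 0 < 1 - ε / 2) 2)
  calc (1 - ε / 2) ^ 2 * (u ⬝ᵥ u) ≤ (C *ᵥ u) ⬝ᵥ (C *ᵥ u) := hu
    _ = ((C - 1) *ᵥ w) ⬝ᵥ ((C - 1) *ᵥ w) := by rw [huw]
    _ ≤ (ε / 2) ^ 2 * (w ⬝ᵥ w) := hw
    _ = (1 / 2) ^ 2 * (ε ^ 2 * (w ⬝ᵥ w)) := by ring
    _ ≤ (1 - ε / 2) ^ 2 * (ε ^ 2 * (w ⬝ᵥ w)) := by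
        have hww : 0 ≤ w ⬝ᵥ w := dotProduct_self_star_nonneg w
        gcongr
        linarith

theorem conj_mulVec_mulVec_newton_sub {S A : Matrix n n ℝ} (hS : IsUnit S.det) (hA : IsUnit A.det)
    (g : n → ℝ) :
    (S⁻¹ * A * S⁻¹) *ᵥ (S *ᵥ (-((S * S)⁻¹ *ᵥ g) - -(A⁻¹ *ᵥ g))) =
      (S⁻¹ * A * S⁻¹ - 1) *ᵥ (S *ᵥ -((S * S)⁻¹ *ᵥ g)) := by
  have hSS : S * (S * S)⁻¹ = S⁻¹ := by
    rw [Matrix.mul_inv_rev, mul_nonsing_inv_cancel_left _ _ hS]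
  have hconj : S⁻¹ * A * S⁻¹ * S * (A⁻¹ - (S * S)⁻¹) = (1 - S⁻¹ * A * S⁻¹) * S⁻¹ := by
    rw [Matrix.mul_inv_rev, nonsing_inv_mul_cancel_right _ _ hS, Matrix.mul_sub,
      Matrix.mul_assoc _ A, mul_nonsing_inv _ hA]
    simp only [Matrix.sub_mul, Matrix.mul_assoc, Matrix.one_mul, Matrix.mul_one]
  rw [neg_sub_neg, ← sub_mulVec, mulVec_mulVec, mulVec_mulVec, hconj]
  simp only [mulVec_neg, mulVec_mulVec, hSS]
  rw [← neg_mulVec, ← Matrix.neg_mul, neg_sub]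

end Matrix

theorem closeness_newton_directions_general
    (d : ℕ)
    (H HS : Matrix (Fin d) (Fin d) ℝ)
    (hH : H.PosDef) (hHS : HS.PosDef)
    (g : Fin d → ℝ) (ε : ℝ) (hε : ε ∈ Set.Ioo (0 : ℝ) (1/4))
    (CS : Matrix (Fin d) (Fin d) ℝ)
    (hCS : CS = (Matrix.PosSemidef.sqrt hH.posSemidef)⁻¹ * HS * (Matrix.PosSemidef.sqrt hH.posSemidef)⁻¹)
    (vne vnsk : Fin d → ℝ)
    (hvne : vne = -(H⁻¹ *ᵥ g)) (hvnsk : vnsk = -(HS⁻¹ *ᵥ g))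
    (hlo : (CS - (1 - ε/2) • (1 : Matrix (Fin d) (Fin d) ℝ)).PosSemidef)
    (hhi : ((1 + ε/2) • (1 : Matrix (Fin d) (Fin d) ℝ) - CS).PosSemidef) :
    Real.sqrt ((vne - vnsk) ⬝ᵥ (H *ᵥ (vne - vnsk))) ≤
      ε * Real.sqrt (vne ⬝ᵥ (H *ᵥ vne)) := by
  obtain ⟨hε0, hε_lt⟩ := hε
  set S := hH.posSemidef.sqrt
  have hS : S.IsHermitian := hH.posSemidef.posSemidef_sqrt.1
  have hSS : S * S = H := hH.posSemidef.sqrt_mul_self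
  have hSdet : IsUnit S.det :=
    isUnit_of_mul_isUnit_left (by rw [← det_mul, hSS]; exact hH.det_pos.ne'.isUnit)
  have hwhiten : CS *ᵥ (S *ᵥ (vne - vnsk)) = (CS - 1) *ᵥ (S *ᵥ vne) := by
    rw [hCS, hvne, hvnsk, ← hSS]
    exact conj_mulVec_mulVec_newton_sub hSdet hHS.det_pos.ne'.isUnit g
  have hbound := dotProduct_self_le_sq_mul_of_mulVec_eq hε0 (by linarith) hlo hhi hwhiten
  rw [← hSS, hS.dotProduct_mulVec_mul_self, hS.dotProduct_mulVec_mul_self]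
  calc √((S *ᵥ (vne - vnsk)) ⬝ᵥ (S *ᵥ (vne - vnsk)))
      ≤ √(ε ^ 2 * ((S *ᵥ vne) ⬝ᵥ (S *ᵥ vne))) := Real.sqrt_le_sqrt hbound
    _ = ε * √((S *ᵥ vne) ⬝ᵥ (S *ᵥ vne)) := by rw [Real.sqrt_mul (sq_nonneg ε), Real.sqrt_sq hε0.le]

/-- **Closeness of Newton directions** (first conclusion of Theorem 1).
If `(1 - ε/2) I ⪯ C_S ⪯ (1 + ε/2) I` with `C_S = H^{-1/2} H_S H^{-1/2}`, then
`‖v_ne - v_nsk‖_H ≤ ε ‖v_ne‖_H`. -/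
theorem closeness_newton_directions
    (d : ℕ) (hd : 1 ≤ d)
    (H HS : Matrix (Fin d) (Fin d) ℝ)
    (hH : H.PosDef) (hHS : HS.PosDef)
    (g : Fin d → ℝ) (ε : ℝ) (hε : ε ∈ Set.Ioo (0 : ℝ) (1/4))
    (CS : Matrix (Fin d) (Fin d) ℝ)
    (hCS : CS = (Matrix.PosSemidef.sqrt hH.posSemidef)⁻¹ * HS * (Matrix.PosSemidef.sqrt hH.posSemidef)⁻¹)
    (vne vnsk : Fin d → ℝ)
    (hvne : vne = -(H⁻¹ *ᵥ g)) (hvnsk : vnsk = -(HS⁻¹ *ᵥ g))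
    (hlo : (CS - (1 - ε/2) • (1 : Matrix (Fin d) (Fin d) ℝ)).PosSemidef)
    (hhi : ((1 + ε/2) • (1 : Matrix (Fin d) (Fin d) ℝ) - CS).PosSemidef) :
    Real.sqrt ((vne - vnsk) ⬝ᵥ (H *ᵥ (vne - vnsk))) ≤
      ε * Real.sqrt (vne ⬝ᵥ (H *ᵥ vne)) :=
  closeness_newton_directions_general d H HS hH hHS g ε hε CS hCS vne vnsk hvne hvnsk hlo hhi
end

section
/- Let δ ∈ (0,1), α > 0, τ ∈ (0,1], η > 0, and let (β_t)_{t≥0} be a sequence of positive real numbers such that β_0 ≤ η, η·α^{1/τ} < 1, √δ·α^{1/τ} < 1, and α^{1/τ}·β_{t+1} ≤ (α^{1/τ}·β_t)^{1+τ} for all t ≥ 0. Then β_t ≤ √δ for every t ≥ T, where T := ⌈ (1/log(1+τ)) · log( log(1/(α^{1/τ}√δ)) / log(1/(α^{1/τ}η)) ) ⌉. (Lemma 4, Geometric convergence and sufficient iteration number.) -/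
/-- **Lemma 4 (Geometric convergence and sufficient iteration number).**
If `β₀ ≤ η`, `η α^{1/τ} < 1`, `√δ α^{1/τ} < 1` and
`α^{1/τ} β_{t+1} ≤ (α^{1/τ} β_t)^{1+τ}` for all `t`, then `β_t ≤ √δ` for all
`t ≥ T` where `T = ⌈ log( log(1/(α^{1/τ}√δ)) / log(1/(α^{1/τ}η)) ) / log(1+τ) ⌉`. -/
theorem geometric_convergence_iteration_bound
    (δ α τ η : ℝ) (β : ℕ → ℝ)
    (hδ : δ ∈ Set.Ioo (0 : ℝ) 1) (hα : 0 < α) (hτ : τ ∈ Set.Ioc (0 : ℝ) 1)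
    (hη : 0 < η)
    (hβpos : ∀ t, 0 < β t)
    (hβ0 : β 0 ≤ η)
    (hηα : η * α ^ (1/τ) < 1)
    (hδα : Real.sqrt δ * α ^ (1/τ) < 1)
    (hrec : ∀ t, α ^ (1/τ) * β (t+1) ≤ (α ^ (1/τ) * β t) ^ (1 + τ)) :
    ∀ t : ℕ,
      (⌈(1 / Real.log (1 + τ)) *
          Real.log (Real.log (1 / (α ^ (1/τ) * Real.sqrt δ)) /
            Real.log (1 / (α ^ (1/τ) * η)))⌉ : ℤ) ≤ (t : ℤ) →
      β t ≤ Real.sqrt δ := by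
  obtain ⟨hδ0, hδ1⟩ := hδ
  obtain ⟨hτ0, hτ1⟩ := hτ
  set A := α ^ (1/τ) with hAdef
  have hA : 0 < A := Real.rpow_pos_of_pos hα _
  have hAη : 0 < A * η := mul_pos hA hη
  have hAη1 : A * η < 1 := by rwa [mul_comm] at hηα
  have hsδ : 0 < Real.sqrt δ := Real.sqrt_pos.2 hδ0
  have hAδ : 0 < A * Real.sqrt δ := mul_pos hA hsδ
  have hAδ1 : A * Real.sqrt δ < 1 := by rwa [mul_comm] at hδα
  set L := Real.log (1 / (A * η)) with hLdef
  set M := Real.log (1 / (A * Real.sqrt δ)) with hMdef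
  have hL : 0 < L := Real.log_pos (by rw [lt_div_iff₀ hAη]; linarith)
  have hM : 0 < M := Real.log_pos (by rw [lt_div_iff₀ hAδ]; linarith)
  have hLeq : Real.exp (-L) = A * η := by
    rw [hLdef, Real.log_div one_ne_zero (ne_of_gt hAη), Real.log_one, zero_sub,
      neg_neg, Real.exp_log hAη]
  have hMeq : Real.exp (-M) = A * Real.sqrt δ := by
    rw [hMdef, Real.log_div one_ne_zero (ne_of_gt hAδ), Real.log_one, zero_sub,
      neg_neg, Real.exp_log hAδ]
  have h1τ : (0:ℝ) < 1 + τ := by linarith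
  have key : ∀ t, A * β t ≤ Real.exp (-((1+τ)^t * L)) := by
    intro t
    induction t with
    | zero =>
      have : A * β 0 ≤ A * η := mul_le_mul_of_nonneg_left hβ0 hA.le
      simpa [hLeq] using this
    | succ n ih =>
      have h1 := hrec n
      have h2 : (A * β n) ^ (1+τ) ≤ (Real.exp (-((1+τ)^n * L))) ^ (1+τ) :=
        Real.rpow_le_rpow (mul_pos hA (hβpos n)).le ih (by linarith)
      have h3 : (Real.exp (-((1+τ)^n * L))) ^ (1+τ) = Real.exp (-((1+τ)^(n+1) * L)) := by
        rw [Real.rpow_def_of_pos (Real.exp_pos _), Real.log_exp]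
        congr 1
        ring
      calc A * β (n+1) ≤ (A * β n) ^ (1+τ) := h1
        _ ≤ _ := h3 ▸ h2
  intro t ht
  have hlog1τ : 0 < Real.log (1+τ) := Real.log_pos (by linarith)
  have hceil : (1 / Real.log (1+τ)) * Real.log (M / L) ≤ (t:ℝ) := by
    have := Int.ceil_le.mp ht
    exact_mod_cast this
  have hlogML : Real.log (M / L) ≤ (t:ℝ) * Real.log (1+τ) := by
    rw [one_div, inv_mul_le_iff₀ hlog1τ] at hceil
    linarith [hceil]
  have hML : M / L ≤ (1+τ)^t := by
    have h4 : Real.log (M / L) ≤ Real.log ((1+τ)^t) := by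
      rw [Real.log_pow]; push_cast; linarith
    exact (Real.log_le_log_iff (div_pos hM hL) (pow_pos h1τ t)).mp h4
  have hMle : M ≤ (1+τ)^t * L := by
    rw [div_le_iff₀ hL] at hML; linarith
  have hfin : A * β t ≤ A * Real.sqrt δ := by
    calc A * β t ≤ Real.exp (-((1+τ)^t * L)) := key t
      _ ≤ Real.exp (-M) := Real.exp_le_exp.mpr (by linarith)
      _ = A * Real.sqrt δ := hMeq
  exact le_of_mul_le_mul_left hfin hA
end

section
/- Let n, d ≥ 1, μ > 0, let A be an n×d real matrix, and let G be a d×d real symmetric matrix with G ⪰ μ·I_d. Then trace( A (AᵀA + G)^{-1} Aᵀ ) ≤ trace( AᵀA (AᵀA + μ·I_d)^{-1} ). In particular the left-hand side is bounded by the effective dimension d_μ := trace(AᵀA (AᵀA + μ I_d)^{-1}). (Inequality (frobnormeffdim) established in the proof of Lemma 1; note AᵀA + G and AᵀA + μI_d are positive definite, hence invertible.) -/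
/-!
Since `G ⪰ μ I`, we have `AᵀA + μ I ⪯ AᵀA + G`, and inversion is antitone on positive definite
matrices in the Loewner order, so `(AᵀA + G)⁻¹ ⪯ (AᵀA + μ I)⁻¹`. Conjugating by `A` and taking
traces preserves this, and `trace (A X Aᵀ) = trace (AᵀA X)`.
-/

open Matrix

open scoped MatrixOrder

namespace Matrix

open scoped ComplexOrder

variable {m n 𝕜 : Type*} [Fintype n] [RCLike 𝕜]

lemma PosDef.inv_anti [DecidableEq n] {M N : Matrix n n 𝕜} (hN : N.PosDef) (hNM : N ≤ M) :
    M⁻¹ ≤ N⁻¹ := by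
  obtain ⟨S, hS, rfl⟩ : ∃ S, S.PosSemidef ∧ M = N + S := ⟨M - N, hNM, by abel⟩
  have hM : (N + S).PosDef := hN.add_posSemidef hS
  have hN_det := (isUnit_iff_isUnit_det N).mp hN.isUnit
  have hM_det := (isUnit_iff_isUnit_det _).mp hM.isUnit
  have key : N⁻¹ - (N + S)⁻¹ = (N + S)⁻¹ * (S + S * N⁻¹ * S) * (N + S)⁻¹ :=
    calc N⁻¹ - (N + S)⁻¹ = N⁻¹ * S * (N + S)⁻¹ := by
          rw [inv_sub_inv (by simp [hN.isUnit, hM.isUnit]), add_sub_cancel_left]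
      _ = (N + S)⁻¹ * ((N + S) * N⁻¹ * S) * (N + S)⁻¹ := by
          rw [Matrix.mul_assoc (N + S), ← Matrix.mul_assoc (N + S)⁻¹, nonsing_inv_mul _ hM_det,
            Matrix.one_mul]
      _ = (N + S)⁻¹ * (S + S * N⁻¹ * S) * (N + S)⁻¹ := by
          rw [Matrix.add_mul, Matrix.add_mul, mul_nonsing_inv _ hN_det, Matrix.one_mul]
  rw [Matrix.le_iff, key]
  simpa only [hM.isHermitian.inv.eq, hS.isHermitian.eq] using
    (hS.add (hN.posSemidef.inv.conjTranspose_mul_mul_same S)).conjTranspose_mul_mul_same (N + S)⁻¹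

lemma trace_mul_mul_conjTranspose_mono [Fintype m] {X Y : Matrix n n 𝕜} (hXY : X ≤ Y)
    (A : Matrix m n 𝕜) : trace (A * X * Aᴴ) ≤ trace (A * Y * Aᴴ) := by
  rw [← sub_nonneg, ← trace_sub, ← Matrix.sub_mul, ← Matrix.mul_sub]
  exact (hXY.mul_mul_conjTranspose_same A).trace_nonneg

end Matrix

theorem trace_le_effective_dimension_general
    (n d : ℕ) (μ : ℝ) (hμ : 0 < μ)
    (A : Matrix (Fin n) (Fin d) ℝ)
    (G : Matrix (Fin d) (Fin d) ℝ)
    (hGμ : (G - μ • (1 : Matrix (Fin d) (Fin d) ℝ)).PosSemidef) :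
    trace (A * (Aᵀ * A + G)⁻¹ * Aᵀ) ≤
      trace (Aᵀ * A * (Aᵀ * A + μ • (1 : Matrix (Fin d) (Fin d) ℝ))⁻¹) := by
  have hAtA : (Aᵀ * A).PosSemidef := by
    simpa only [conjTranspose_eq_transpose_of_trivial] using posSemidef_conjTranspose_mul_self A
  have hN : (Aᵀ * A + μ • (1 : Matrix (Fin d) (Fin d) ℝ)).PosDef :=
    PosDef.posSemidef_add hAtA (PosDef.one.smul hμ)
  have hle : Aᵀ * A + μ • 1 ≤ Aᵀ * A + G := add_le_add_right (le_iff.mpr hGμ) _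
  calc trace (A * (Aᵀ * A + G)⁻¹ * Aᵀ)
      ≤ trace (A * (Aᵀ * A + μ • 1)⁻¹ * Aᵀ) := by
        simpa only [conjTranspose_eq_transpose_of_trivial] using
          trace_mul_mul_conjTranspose_mono (hN.inv_anti hle) A
    _ = trace (Aᵀ * A * (Aᵀ * A + μ • 1)⁻¹) := by
        rw [trace_mul_comm, Matrix.mul_assoc]

/-- Inequality (frobnormeffdim) from the proof of Lemma 1: if `G ⪰ μ I_d`, then
`trace(A (AᵀA + G)⁻¹ Aᵀ) ≤ trace(AᵀA (AᵀA + μ I_d)⁻¹)`, the effective dimension. -/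
theorem trace_le_effective_dimension
    (n d : ℕ) (hn : 1 ≤ n) (hd : 1 ≤ d) (μ : ℝ) (hμ : 0 < μ)
    (A : Matrix (Fin n) (Fin d) ℝ)
    (G : Matrix (Fin d) (Fin d) ℝ) (hG : G.IsHermitian)
    (hGμ : (G - μ • (1 : Matrix (Fin d) (Fin d) ℝ)).PosSemidef) :
    trace (A * (Aᵀ * A + G)⁻¹ * Aᵀ) ≤
      trace (Aᵀ * A * (Aᵀ * A + μ • (1 : Matrix (Fin d) (Fin d) ℝ))⁻¹) :=
  trace_le_effective_dimension_general n d μ hμ A G hGμ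
end

section
/- Let d ≥ 1 and let f : ℝ^d → ℝ be twice continuously differentiable, with gradient ∇f and Hessian H(y) at each point y. Let x, v, v_ne ∈ ℝ^d, let ε' ≥ 0, and assume: (i) H(x) and H(x+v) are positive definite; (ii) H(x)·v_ne = -∇f(x); (iii) with λ := √(v_neᵀ H(x) v_ne), one has (1+ε')·λ < 1; (iv) √((v - v_ne)ᵀ H(x) (v - v_ne)) ≤ ε'·λ; (v) for every s ∈ [0,1], (1 - s(1+ε')λ)²·H(x) ⪯ H(x+sv) ⪯ (1 - s(1+ε')λ)^{-2}·H(x). Then the Newton decrement at x+v satisfies √( ∇f(x+v)ᵀ H(x+v)^{-1} ∇f(x+v) ) ≤ ((1+ε')·λ² + ε'·λ) / (1 - (1+ε')·λ)². (Inequality (intermediateboundnewtondecrement) established in the proof of Lemma 3, with the self-concordance sandwich relation (v) taken as hypothesis.) -/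
open Matrix

/-- The continuous linear map `u ↦ w ⬝ᵥ u`, representing the gradient vector `w`. -/
noncomputable def dotCLM {d : ℕ} (w : Fin d → ℝ) : (Fin d → ℝ) →L[ℝ] ℝ :=
  LinearMap.toContinuousLinearMap
    { toFun := fun u => w ⬝ᵥ u
      map_add' := fun u v => by simp [dotProduct_add]
      map_smul' := fun c u => by simp [dotProduct_smul] }

/-- The continuous linear map `u ↦ M *ᵥ u`, representing the Hessian matrix `M`. -/
noncomputable def mulVecCLM {d : ℕ} (M : Matrix (Fin d) (Fin d) ℝ) :
    (Fin d → ℝ) →L[ℝ] (Fin d → ℝ) :=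
  LinearMap.toContinuousLinearMap M.mulVecLin

/-!
Write `‖u‖ₓ = √(uᵀH(x)u)` and `α = (1 + ε')λ`; then `‖v‖ₓ ≤ ‖v - v_ne‖ₓ + ‖v_ne‖ₓ ≤ α`.
Fix a test vector `w`. Along the segment, `s ↦ ∇f(x+sv)·w` has derivative `wᵀH(x+sv)v`, which the
sandwich bounds by `wᵀH(x)v + ((1 - sα)⁻² - 1)‖v‖ₓ‖w‖ₓ`; comparing with an antiderivative of the
right-hand side gives `∇f(x+v)·w ≤ ∇f(x)·w + wᵀH(x)v + α/(1 - α)·‖v‖ₓ‖w‖ₓ`. The Newton equation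
turns `∇f(x)·w + wᵀH(x)v` into `wᵀH(x)(v - v_ne) ≤ ε'λ‖w‖ₓ`, the sandwich at `s = 1` gives
`(1 - α)‖w‖ₓ ≤ ‖w‖ₓ₊ᵥ`, and the Newton decrement at `x + v` is at most any `C` with
`∇f(x+v)·w ≤ C‖w‖ₓ₊ᵥ` for all `w`.
-/

open scoped MatrixOrder

theorem sub_le_sub_of_hasDerivAt_le {φ φ' B B' : ℝ → ℝ} {a b : ℝ} (hab : a ≤ b)
    (hφ : ∀ t ∈ Set.Icc a b, HasDerivAt φ (φ' t) t)
    (hB : ∀ t ∈ Set.Icc a b, HasDerivAt B (B' t) t)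
    (hle : ∀ t ∈ Set.Icc a b, φ' t ≤ B' t) :
    φ b - φ a ≤ B b - B a := by
  have hderiv : ∀ t ∈ Set.Icc a b, HasDerivAt (B - φ) (B' t - φ' t) t :=
    fun t ht => (hB t ht).sub (hφ t ht)
  have hmono : MonotoneOn (B - φ) (Set.Icc a b) :=
    monotoneOn_of_hasDerivWithinAt_nonneg (convex_Icc a b)
      (fun t ht => (hderiv t ht).continuousAt.continuousWithinAt)
      (fun t ht => (hderiv t (interior_subset ht)).hasDerivWithinAt)
      (fun t ht => sub_nonneg.2 (hle t (interior_subset ht)))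
  have := hmono (Set.left_mem_Icc.2 hab) (Set.right_mem_Icc.2 hab) hab
  simp only [Pi.sub_apply] at this
  linarith

theorem hasDerivAt_div_one_sub_mul {a t : ℝ} (ht : 1 - t * a ≠ 0) :
    HasDerivAt (fun s => s / (1 - s * a)) ((1 - t * a) ^ 2)⁻¹ t := by
  refine ((hasDerivAt_id' t).div (((hasDerivAt_id' t).mul_const a).const_sub 1) ht).congr_deriv
    ?_
  field_simp
  ring

namespace Matrix

variable {n : Type*} [Fintype n]

theorem dotProduct_mulVec_le_of_le {A B : Matrix n n ℝ} (h : A ≤ B) (u : n → ℝ) :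
    u ⬝ᵥ A *ᵥ u ≤ u ⬝ᵥ B *ᵥ u := by
  simpa [sub_mulVec] using h.dotProduct_mulVec_nonneg u

theorem mul_sqrt_dotProduct_mulVec_le_of_le {M N : Matrix n n ℝ} {c : ℝ} (hc : 0 ≤ c)
    (h : c ^ 2 • M ≤ N) (u : n → ℝ) :
    c * √(u ⬝ᵥ M *ᵥ u) ≤ √(u ⬝ᵥ N *ᵥ u) := by
  have := dotProduct_mulVec_le_of_le h u
  rw [smul_mulVec, dotProduct_smul, smul_eq_mul] at this
  calc c * √(u ⬝ᵥ M *ᵥ u) = √(c ^ 2 * (u ⬝ᵥ M *ᵥ u)) := by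
        rw [Real.sqrt_mul (sq_nonneg c), Real.sqrt_sq hc]
    _ ≤ √(u ⬝ᵥ N *ᵥ u) := Real.sqrt_le_sqrt this

theorem IsHermitian.dotProduct_mulVec_comm {M : Matrix n n ℝ} (hM : M.IsHermitian)
    (u w : n → ℝ) : u ⬝ᵥ M *ᵥ w = w ⬝ᵥ M *ᵥ u := by
  rw [dotProduct_mulVec, ← mulVec_transpose, dotProduct_comm,
    ← conjTranspose_eq_transpose_of_trivial, hM.eq]

namespace PosSemidef

variable {M : Matrix n n ℝ} (hM : M.PosSemidef)
include hM

theorem dotProduct_mulVec_self_nonneg (u : n → ℝ) : 0 ≤ u ⬝ᵥ M *ᵥ u := by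
  simpa using hM.dotProduct_mulVec_nonneg u

theorem dotProduct_mulVec_le_sqrt_mul_sqrt (u w : n → ℝ) :
    u ⬝ᵥ M *ᵥ w ≤ √(u ⬝ᵥ M *ᵥ u) * √(w ⬝ᵥ M *ᵥ w) := by
  classical
  have hcs : (u ⬝ᵥ M *ᵥ w) ^ 2 ≤ (u ⬝ᵥ M *ᵥ u) * (w ⬝ᵥ M *ᵥ w) := by
    have := LinearMap.BilinForm.apply_mul_apply_le_of_forall_zero_le (toLinearMap₂' ℝ M)
      (fun x => by simpa [toLinearMap₂'_apply'] using hM.dotProduct_mulVec_self_nonneg x) u w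
    simpa [toLinearMap₂'_apply', hM.isHermitian.dotProduct_mulVec_comm w u, sq] using this
  rw [← Real.sqrt_mul (hM.dotProduct_mulVec_self_nonneg u)]
  exact Real.le_sqrt_of_sq_le hcs

theorem sqrt_dotProduct_mulVec_add_le (u w : n → ℝ) :
    √((u + w) ⬝ᵥ M *ᵥ (u + w)) ≤ √(u ⬝ᵥ M *ᵥ u) + √(w ⬝ᵥ M *ᵥ w) := by
  have hcs := hM.dotProduct_mulVec_le_sqrt_mul_sqrt u w
  have hu := Real.sq_sqrt (hM.dotProduct_mulVec_self_nonneg u)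
  have hw := Real.sq_sqrt (hM.dotProduct_mulVec_self_nonneg w)
  rw [Real.sqrt_le_left (by positivity)]
  simp only [mulVec_add, dotProduct_add, add_dotProduct,
    hM.isHermitian.dotProduct_mulVec_comm w u]
  nlinarith

end PosSemidef

namespace PosDef

variable {M : Matrix n n ℝ} (hM : M.PosDef)
include hM

theorem dotProduct_mulVec_le_of_mem_Icc {S : Matrix n n ℝ} {k : ℝ}
    (hS : S ∈ Set.Icc (-(k • M)) (k • M)) (v w : n → ℝ) :
    w ⬝ᵥ S *ᵥ v ≤ k * (√(v ⬝ᵥ M *ᵥ v) * √(w ⬝ᵥ M *ᵥ w)) := by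
  by_cases hv : v = 0
  · simp [hv]
  by_cases hw : w = 0
  · simp [hw]
  have hSherm : S.IsHermitian := by
    simpa using hS.1.isHermitian.sub (hM.isHermitian.smul (IsSelfAdjoint.all k))
  set a := √(v ⬝ᵥ M *ᵥ v)
  set b := √(w ⬝ᵥ M *ᵥ w)
  have ha : 0 < a := Real.sqrt_pos.2 (by simpa using hM.dotProduct_mulVec_pos hv)
  have hb : 0 < b := Real.sqrt_pos.2 (by simpa using hM.dotProduct_mulVec_pos hw)
  have ha2 : a * a = v ⬝ᵥ M *ᵥ v :=
    Real.mul_self_sqrt (hM.posSemidef.dotProduct_mulVec_self_nonneg v)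
  have hb2 : b * b = w ⬝ᵥ M *ᵥ w :=
    Real.mul_self_sqrt (hM.posSemidef.dotProduct_mulVec_self_nonneg w)
  -- polarization: `4ab wSv` is the difference of the `S`-forms of `bv ± aw`
  have hup := dotProduct_mulVec_le_of_le hS.2 (b • v + a • w)
  have hlo := dotProduct_mulVec_le_of_le hS.1 (b • v - a • w)
  simp only [mulVec_add, mulVec_sub, mulVec_smul, smul_mulVec, neg_mulVec, dotProduct_add,
    dotProduct_sub, add_dotProduct, sub_dotProduct, dotProduct_smul, smul_dotProduct,
    dotProduct_neg, smul_eq_mul, hSherm.dotProduct_mulVec_comm v w,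
    hM.isHermitian.dotProduct_mulVec_comm v w, ← ha2, ← hb2] at hup hlo
  nlinarith [mul_pos ha hb]

theorem dotProduct_mulVec_le_of_sandwich {H : Matrix n n ℝ} {c : ℝ} (hc : 0 < c)
    (hlo : c • M ≤ H) (hup : H ≤ c⁻¹ • M) (v w : n → ℝ) :
    w ⬝ᵥ H *ᵥ v ≤ w ⬝ᵥ M *ᵥ v + (c⁻¹ - 1) * (√(v ⬝ᵥ M *ᵥ v) * √(w ⬝ᵥ M *ᵥ w)) := by
  have hgap : 0 ≤ c + c⁻¹ - 2 := by
    have : c + c⁻¹ - 2 = (c - 1) ^ 2 / c := by field_simp; ring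
    rw [this]; positivity
  have hS : H - M ∈ Set.Icc (-((c⁻¹ - 1) • M)) ((c⁻¹ - 1) • M) := by
    constructor
    · calc -((c⁻¹ - 1) • M) ≤ c • M - M := by
            rw [le_iff, show c • M - M - -((c⁻¹ - 1) • M) = (c + c⁻¹ - 2) • M by module]
            exact hM.posSemidef.smul hgap
        _ ≤ H - M := sub_le_sub_right hlo M
    · calc H - M ≤ c⁻¹ • M - M := sub_le_sub_right hup M
        _ = (c⁻¹ - 1) • M := by rw [sub_smul, one_smul]
  have := hM.dotProduct_mulVec_le_of_mem_Icc hS v w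
  rw [sub_mulVec, dotProduct_sub] at this
  linarith

theorem sqrt_dotProduct_inv_mulVec_le [DecidableEq n] {u : n → ℝ} {C : ℝ} (hC : 0 ≤ C)
    (h : ∀ w, u ⬝ᵥ w ≤ C * √(w ⬝ᵥ M *ᵥ w)) : √(u ⬝ᵥ M⁻¹ *ᵥ u) ≤ C := by
  set z := M⁻¹ *ᵥ u
  have hMz : M *ᵥ z = u := by
    rw [mulVec_mulVec, mul_nonsing_inv _ ((isUnit_iff_isUnit_det M).1 hM.isUnit), one_mulVec]
  have hz : z ⬝ᵥ M *ᵥ z = u ⬝ᵥ z := by rw [hMz, dotProduct_comm]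
  have hle := h z
  rw [hz] at hle
  have hsq := Real.mul_self_sqrt (hz ▸ hM.posSemidef.dotProduct_mulVec_self_nonneg z)
  nlinarith [Real.sqrt_nonneg (u ⬝ᵥ z)]

end PosDef

end Matrix

theorem dotProduct_sub_dotProduct_le_of_sandwich {d : ℕ} {G : (Fin d → ℝ) → Fin d → ℝ}
    {H : (Fin d → ℝ) → Matrix (Fin d) (Fin d) ℝ} {x v : Fin d → ℝ} {α : ℝ}
    (hα0 : 0 ≤ α) (hα1 : α < 1)
    (hG : ∀ s ∈ Set.Icc (0 : ℝ) 1, HasFDerivAt G (mulVecCLM (H (x + s • v))) (x + s • v))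
    (hHx : (H x).PosDef)
    (hsand : ∀ s ∈ Set.Icc (0 : ℝ) 1,
      (1 - s * α) ^ 2 • H x ≤ H (x + s • v) ∧ H (x + s • v) ≤ ((1 - s * α) ^ 2)⁻¹ • H x)
    (w : Fin d → ℝ) :
    G (x + v) ⬝ᵥ w - G x ⬝ᵥ w ≤
      w ⬝ᵥ H x *ᵥ v + α / (1 - α) * (√(v ⬝ᵥ H x *ᵥ v) * √(w ⬝ᵥ H x *ᵥ w)) := by
  set K := √(v ⬝ᵥ H x *ᵥ v) * √(w ⬝ᵥ H x *ᵥ w)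
  have hpos : ∀ s ∈ Set.Icc (0 : ℝ) 1, 0 < 1 - s * α := fun s hs => by
    nlinarith [hs.1, hs.2]
  have hφ : ∀ s ∈ Set.Icc (0 : ℝ) 1,
      HasDerivAt (fun t => G (x + t • v) ⬝ᵥ w) (w ⬝ᵥ H (x + s • v) *ᵥ v) s := by
    intro s hs
    have hline : HasDerivAt (fun t : ℝ => x + t • v) v s := by
      simpa using ((hasDerivAt_id s).smul_const v).const_add x
    have := (dotCLM w).hasFDerivAt.comp_hasDerivAt s ((hG s hs).comp_hasDerivAt s hline)
    simpa [Function.comp_def, dotCLM, mulVecCLM, dotProduct_comm w] using this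
  have hB : ∀ s ∈ Set.Icc (0 : ℝ) 1,
      HasDerivAt (fun t => t * (w ⬝ᵥ H x *ᵥ v) + (t / (1 - t * α) - t) * K)
        (w ⬝ᵥ H x *ᵥ v + (((1 - s * α) ^ 2)⁻¹ - 1) * K) s := fun s hs =>
    (((hasDerivAt_id' s).mul_const _).add (((hasDerivAt_div_one_sub_mul
      (hpos s hs).ne').sub (hasDerivAt_id' s)).mul_const K)).congr_deriv (by ring)
  have hle : ∀ s ∈ Set.Icc (0 : ℝ) 1,
      w ⬝ᵥ H (x + s • v) *ᵥ v ≤ w ⬝ᵥ H x *ᵥ v + (((1 - s * α) ^ 2)⁻¹ - 1) * K :=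
    fun s hs => hHx.dotProduct_mulVec_le_of_sandwich (pow_pos (hpos s hs) 2)
      (hsand s hs).1 (hsand s hs).2 v w
  have := sub_le_sub_of_hasDerivAt_le zero_le_one hφ hB hle
  have hα : 1 / (1 - α) - 1 = α / (1 - α) := by
    field_simp [(sub_pos.2 hα1).ne']; ring
  simp only [one_smul, zero_smul, add_zero, one_mul, zero_mul, zero_div, sub_zero] at this
  rw [← hα]
  linarith

theorem intermediate_newton_decrement_bound_general
    (d : ℕ)
    (gradf : (Fin d → ℝ) → (Fin d → ℝ))
    (Hess : (Fin d → ℝ) → Matrix (Fin d) (Fin d) ℝ)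
    (hhess : ∀ y, HasFDerivAt gradf (mulVecCLM (Hess y)) y)
    (x v vne : Fin d → ℝ) (ε' : ℝ) (hε' : 0 ≤ ε')
    (hHx : (Hess x).PosDef) (hHxv : (Hess (x + v)).PosDef)
    (hvne : Hess x *ᵥ vne = -gradf x)
    (lam : ℝ) (hlam : lam = Real.sqrt (vne ⬝ᵥ (Hess x *ᵥ vne)))
    (hstep : (1 + ε') * lam < 1)
    (hclose : Real.sqrt ((v - vne) ⬝ᵥ (Hess x *ᵥ (v - vne))) ≤ ε' * lam)
    (hsand : ∀ s ∈ Set.Icc (0 : ℝ) 1,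
      (Hess (x + s • v) - (1 - s * ((1 + ε') * lam)) ^ 2 • Hess x).PosSemidef ∧
      (((1 - s * ((1 + ε') * lam)) ^ 2)⁻¹ • Hess x - Hess (x + s • v)).PosSemidef) :
    Real.sqrt (gradf (x + v) ⬝ᵥ ((Hess (x + v))⁻¹ *ᵥ gradf (x + v))) ≤
      ((1 + ε') * lam ^ 2 + ε' * lam) / (1 - (1 + ε') * lam) ^ 2 := by
  have hlam0 : 0 ≤ lam := hlam ▸ Real.sqrt_nonneg _
  set α := (1 + ε') * lam
  have hα0 : 0 ≤ α := by positivity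
  have hα1 : 0 < 1 - α := sub_pos.2 hstep
  have hv : √(v ⬝ᵥ Hess x *ᵥ v) ≤ α := by
    have := hHx.posSemidef.sqrt_dotProduct_mulVec_add_le (v - vne) vne
    rw [sub_add_cancel, ← hlam] at this
    linarith
  have hsand₁ : (Hess (x + v) - (1 - α) ^ 2 • Hess x).PosSemidef := by
    simpa using (hsand 1 (by simp)).1
  have hnorm : ∀ w, (1 - α) * √(w ⬝ᵥ Hess x *ᵥ w) ≤ √(w ⬝ᵥ Hess (x + v) *ᵥ w) :=
    mul_sqrt_dotProduct_mulVec_le_of_le hα1.le hsand₁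
  refine hHxv.sqrt_dotProduct_inv_mulVec_le (by positivity) fun w => ?_
  set nw := √(w ⬝ᵥ Hess x *ᵥ w)
  have hnw : 0 ≤ nw := Real.sqrt_nonneg _
  have hsegment :=
    dotProduct_sub_dotProduct_le_of_sandwich hα0 hstep (fun s _ => hhess _) hHx hsand w
  have hinexact : gradf x ⬝ᵥ w + w ⬝ᵥ Hess x *ᵥ v ≤ ε' * lam * nw :=
    calc gradf x ⬝ᵥ w + w ⬝ᵥ Hess x *ᵥ v = w ⬝ᵥ Hess x *ᵥ (v - vne) := by
          rw [mulVec_sub, hvne, dotProduct_sub, dotProduct_neg, dotProduct_comm w (gradf x)]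
          ring
      _ ≤ nw * √((v - vne) ⬝ᵥ Hess x *ᵥ (v - vne)) :=
          hHx.posSemidef.dotProduct_mulVec_le_sqrt_mul_sqrt w (v - vne)
      _ ≤ ε' * lam * nw := by nlinarith
  calc gradf (x + v) ⬝ᵥ w ≤ (ε' * lam + α / (1 - α) * α) * nw := by
        linarith [mul_le_mul_of_nonneg_left hv (mul_nonneg (div_nonneg hα0 hα1.le) hnw)]
    _ = ((1 + ε') * lam ^ 2 + ε' * lam) / (1 - α) ^ 2 * ((1 - α) * nw) := by
        field_simp
        ring
    _ ≤ _ := mul_le_mul_of_nonneg_left (hnorm w) (by positivity)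

/-- Inequality (intermediateboundnewtondecrement) from the proof of Lemma 3:
under the self-concordance sandwich relation, the Newton decrement at `x + v`
satisfies `λ_f(x+v) ≤ ((1+ε')λ² + ε'λ)/(1 - (1+ε')λ)²`. -/
theorem intermediate_newton_decrement_bound
    (d : ℕ) (hd : 1 ≤ d)
    (f : (Fin d → ℝ) → ℝ)
    (gradf : (Fin d → ℝ) → (Fin d → ℝ))
    (Hess : (Fin d → ℝ) → Matrix (Fin d) (Fin d) ℝ)
    (hf : ContDiff ℝ 2 f)
    (hgrad : ∀ y, HasFDerivAt f (dotCLM (gradf y)) y)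
    (hhess : ∀ y, HasFDerivAt gradf (mulVecCLM (Hess y)) y)
    (x v vne : Fin d → ℝ) (ε' : ℝ) (hε' : 0 ≤ ε')
    (hHx : (Hess x).PosDef) (hHxv : (Hess (x + v)).PosDef)
    (hvne : Hess x *ᵥ vne = -gradf x)
    (lam : ℝ) (hlam : lam = Real.sqrt (vne ⬝ᵥ (Hess x *ᵥ vne)))
    (hstep : (1 + ε') * lam < 1)
    (hclose : Real.sqrt ((v - vne) ⬝ᵥ (Hess x *ᵥ (v - vne))) ≤ ε' * lam)
    (hsand : ∀ s ∈ Set.Icc (0 : ℝ) 1,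
      (Hess (x + s • v) - (1 - s * ((1 + ε') * lam)) ^ 2 • Hess x).PosSemidef ∧
      (((1 - s * ((1 + ε') * lam)) ^ 2)⁻¹ • Hess x - Hess (x + s • v)).PosSemidef) :
    Real.sqrt (gradf (x + v) ⬝ᵥ ((Hess (x + v))⁻¹ *ᵥ gradf (x + v))) ≤
      ((1 + ε') * lam ^ 2 + ε' * lam) / (1 - (1 + ε') * lam) ^ 2 :=
  intermediate_newton_decrement_bound_general d gradf Hess hhess x v vne ε' hε' hHx hHxv hvne lam
    hlam hstep hclose hsand
end

section
/- Let ε' ≥ 0, let λ̃ > 0, let a be a real number with a ≤ 1/2 - ε'²/2 - ε', and set û := 1/(1 + (1+ε')·λ̃). Let G₀, G₁ be real numbers satisfying G₁ ≤ G₀ - û·λ̃² - (1+ε')·û·λ̃ - log(1 - û·(1+ε')·λ̃). Then G₁ ≤ G₀ - a·λ̃²·û. (Algebraic chain establishing inequality (decreasefirstphaseintermediate1) in the proof of Lemma 2, First phase decrement; it shows the step size û satisfies the backtracking line-search exit condition.) -/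
/-!
Put `z = (1 + ε') λ̃`, so that `û = 1 / (1 + z)` and `1 - û z = 1 / (1 + z)`; the hypothesis then
reads `G₁ ≤ G₀ - û λ̃² - û z + log (1 + z)`. The trapezoid bound `log t ≤ (t - t⁻¹) / 2` for
`t ≥ 1`, taken at `t = 1 + z`, turns `-û z + log (1 + z)` into at most `û z² / 2`, and
`λ̃² - z² / 2 = (1/2 - ε' - ε'²/2) λ̃² ≥ a λ̃²`.
-/

open Real

lemma Real.log_le_half_sub_inv {t : ℝ} (ht : 1 ≤ t) : log t ≤ (t - t⁻¹) / 2 := by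
  set g : ℝ → ℝ := fun x => (x - x⁻¹) / 2 - log x
  have hg : ∀ x, 0 < x → HasDerivAt g ((1 - -(x ^ 2)⁻¹) / 2 - x⁻¹) x := fun x hx =>
    (((hasDerivAt_id x).sub (hasDerivAt_inv hx.ne')).div_const 2).sub (hasDerivAt_log hx.ne')
  have hmono : MonotoneOn g (Set.Ici 1) := by
    refine monotoneOn_of_hasDerivWithinAt_nonneg (f' := fun x => (1 - -(x ^ 2)⁻¹) / 2 - x⁻¹)
      (convex_Ici 1) ?_ ?_ ?_
    · exact fun x hx => (hg x (by linarith [Set.mem_Ici.1 hx])).continuousAt.continuousWithinAt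
    · intro x hx
      rw [interior_Ici] at hx
      exact (hg x (by linarith [Set.mem_Ioi.1 hx])).hasDerivWithinAt
    · intro x _
      rw [show (1 - -(x ^ 2)⁻¹) / 2 - x⁻¹ = (1 - x⁻¹) ^ 2 / 2 by ring]
      positivity
  have := hmono Set.self_mem_Ici (Set.mem_Ici.2 ht) ht
  simp only [g, inv_one, sub_self, zero_div, log_one] at this
  linarith

lemma Real.log_one_add_le_sub_sq_div {z : ℝ} (hz : 0 ≤ z) :
    log (1 + z) ≤ z - z ^ 2 / (2 * (1 + z)) := by
  have hbound := log_le_half_sub_inv (le_add_of_nonneg_right hz)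
  have hrhs : (1 + z - (1 + z)⁻¹) / 2 = z - z ^ 2 / (2 * (1 + z)) := by
    field_simp
    ring
  rwa [hrhs] at hbound

/-- Algebraic chain establishing inequality (decreasefirstphaseintermediate1) in
the proof of Lemma 2 (First phase decrement): with `û = 1/(1+(1+ε')λ̃)` and
`a ≤ 1/2 - ε'²/2 - ε'`, if `G₁ ≤ G₀ - û λ̃² - (1+ε') û λ̃ - log(1 - û(1+ε')λ̃)`,
then `G₁ ≤ G₀ - a λ̃² û`. -/
theorem first_phase_line_search_bound
    (ε' lamT a uhat G0 G1 : ℝ)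
    (hε' : 0 ≤ ε') (hlamT : 0 < lamT)
    (ha : a ≤ 1/2 - ε' ^ 2 / 2 - ε')
    (huhat : uhat = 1 / (1 + (1 + ε') * lamT))
    (hG : G1 ≤ G0 - uhat * lamT ^ 2 - (1 + ε') * uhat * lamT -
      Real.log (1 - uhat * ((1 + ε') * lamT))) :
    G1 ≤ G0 - a * lamT ^ 2 * uhat := by
  set z := (1 + ε') * lamT
  have hz0 : 0 ≤ z := by positivity
  have hu0 : 0 ≤ uhat := by rw [huhat]; positivity
  have hlog : log (1 - uhat * z) = -log (1 + z) := by
    rw [← log_inv, huhat]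
    congr 1
    field_simp
    ring
  have hlog_le := log_one_add_le_sub_sq_div hz0
  have hsq : z - z ^ 2 / (2 * (1 + z)) - uhat * z = uhat * z ^ 2 / 2 := by
    rw [huhat]
    field_simp
    ring
  have hcoef : a * lamT ^ 2 ≤ lamT ^ 2 - z ^ 2 / 2 := calc
    a * lamT ^ 2 ≤ (1/2 - ε' ^ 2 / 2 - ε') * lamT ^ 2 := mul_le_mul_of_nonneg_right ha (sq_nonneg _)
    _ = lamT ^ 2 - z ^ 2 / 2 := by ring
  calc G1 ≤ G0 - uhat * lamT ^ 2 - uhat * z + log (1 + z) := by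
        rw [hlog] at hG
        linarith
    _ ≤ G0 - uhat * (lamT ^ 2 - z ^ 2 / 2) := by linarith
    _ ≤ G0 - a * lamT ^ 2 * uhat := by linarith [mul_le_mul_of_nonneg_left hcoef hu0]
end
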